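/- arXiv:2312.09332 — 4 statements merged into one kernel-verified Lean document; each statement's English description precedes it below -/
import Mathlib

section
/- Let T ≥ 1, let d be a metric on {1,...,T}, let K ≥ 1, and let L : {1,...,T} → ℕ with L(1) = 0 satisfy the following selection property: for every t ≥ 2 and every ℓ ≥ 1 with ℓ ≤ max{L(s) : s < t}, if there exists s < t with L(s) = ℓ and K·d(s,t) ≤ 2^{-ℓ}, then L(t) ≥ ℓ + 1. Then for all r ≠ t with L(r) = L(t) ≥ 1, we have d(r,t) > 2^{-L(r)} / K. -/
/-- the hierarchical level assignment guarantees that two distinct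
trials at the same level `≥ 1` are more than `2^(-level)/K` apart. -/
theorem stmt1 (T : ℕ) (hT : 1 ≤ T) (d : ℕ → ℕ → ℝ) (K : ℝ) (hK : 1 ≤ K) (L : ℕ → ℕ)
    (hsymm : ∀ s ∈ Finset.Icc 1 T, ∀ t ∈ Finset.Icc 1 T, d s t = d t s)
    (hnonneg : ∀ s ∈ Finset.Icc 1 T, ∀ t ∈ Finset.Icc 1 T, 0 ≤ d s t)
    (hzero : ∀ t ∈ Finset.Icc 1 T, d t t = 0)
    (hpos : ∀ s ∈ Finset.Icc 1 T, ∀ t ∈ Finset.Icc 1 T, s ≠ t → 0 < d s t)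
    (htri : ∀ r ∈ Finset.Icc 1 T, ∀ s ∈ Finset.Icc 1 T, ∀ t ∈ Finset.Icc 1 T,
      d r t ≤ d r s + d s t)
    (hL1 : L 1 = 0)
    (hsel : ∀ t, 2 ≤ t → t ≤ T → ∀ ℓ : ℕ, 1 ≤ ℓ →
      (∃ s, 1 ≤ s ∧ s < t ∧ ℓ ≤ L s) →
      (∃ s, 1 ≤ s ∧ s < t ∧ L s = ℓ ∧ K * d s t ≤ (2 : ℝ) ^ (-(ℓ : ℤ))) →
      ℓ + 1 ≤ L t)
    (r t : ℕ) (hr1 : 1 ≤ r) (hrT : r ≤ T) (ht1 : 1 ≤ t) (htT : t ≤ T)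
    (hne : r ≠ t) (hLeq : L r = L t) (hL : 1 ≤ L r) :
    (2 : ℝ) ^ (-(L r : ℤ)) / K < d r t := by
  have hK0 : (0:ℝ) < K := lt_of_lt_of_le one_pos hK
  by_contra hcon
  push_neg at hcon
  have hKd : K * d r t ≤ (2 : ℝ) ^ (-(L r : ℤ)) := by
    rw [← le_div_iff₀' hK0]; exact hcon
  rcases lt_or_gt_of_ne hne with hlt | hlt
  · -- r < t : apply hsel to t with ℓ = L r, s = r
    have h2t : 2 ≤ t := lt_of_le_of_lt hr1 hlt
    have := hsel t h2t htT (L r) hL ⟨r, hr1, hlt, le_refl _⟩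
      ⟨r, hr1, hlt, rfl, hKd⟩
    omega
  · -- t < r : apply hsel to r with ℓ = L t, s = t
    have h2r : 2 ≤ r := lt_of_le_of_lt ht1 hlt
    have hsy : d t r = d r t := hsymm t (Finset.mem_Icc.mpr ⟨ht1, htT⟩) r (Finset.mem_Icc.mpr ⟨hr1, hrT⟩)
    have hKd' : K * d t r ≤ (2 : ℝ) ^ (-(L t : ℤ)) := by
      rw [hsy, ← hLeq]; exact hKd
    have := hsel r h2r hrT (L t) (hLeq ▸ hL) ⟨t, ht1, hlt, le_refl _⟩
      ⟨t, ht1, hlt, rfl, hKd'⟩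
    omega
end

section
/- Let d be a metric on a finite set B, let K ≥ 1, let L : B → ℕ satisfy the same-level separation property (for r ≠ t with L(r) = L(t), d(r,t) > 2^{-L(r)}/K), and define N := {t ∈ B : there is no s ∈ B with L(s) > L(t) and d(s,t) ≤ (2^{-L(t)} - 2^{-L(s)})/(2K)}. If N is nonempty, then |B| ≤ |N| · (2 + max{L(t) : t ∈ N}). -/
/-- the cardinality of `B` is at most `|N| * (2 + max level in N)`. -/
theorem stmt5 {α : Type*} (B : Finset α) (d : α → α → ℝ) (K : ℝ) (hK : 1 ≤ K)
    (L : α → ℕ)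
    (hsymm : ∀ s ∈ B, ∀ t ∈ B, d s t = d t s)
    (hnonneg : ∀ s ∈ B, ∀ t ∈ B, 0 ≤ d s t)
    (hzero : ∀ t ∈ B, d t t = 0)
    (htri : ∀ r ∈ B, ∀ s ∈ B, ∀ t ∈ B, d r t ≤ d r s + d s t)
    (hsep : ∀ r ∈ B, ∀ t ∈ B, r ≠ t → L r = L t →
      (2 : ℝ) ^ (-(L r : ℤ)) / K < d r t)
    (N : Finset α)
    (hN : ∀ t, t ∈ N ↔ t ∈ B ∧ ¬ ∃ s ∈ B, L t < L s ∧
      d s t ≤ ((2 : ℝ) ^ (-(L t : ℤ)) - (2 : ℝ) ^ (-(L s : ℤ))) / (2 * K))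
    (hne : N.Nonempty) :
    B.card ≤ N.card * (2 + N.sup L) := by
  classical
  have hK0 : (0:ℝ) < K := lt_of_lt_of_le one_pos hK
  have h2K : (0:ℝ) < 2 * K := by positivity
  have hNB : ∀ t ∈ N, t ∈ B := fun t ht => ((hN t).mp ht).1
  -- Step 1: every point of B is close to some point of N
  have exist : ∀ n : ℕ, ∀ s ∈ B, B.sup L - L s ≤ n →
      ∃ t ∈ N, d s t ≤ ((2:ℝ)^(-(L s:ℤ)) - (2:ℝ)^(-(L t:ℤ))) / (2*K) := by
    intro n
    induction n with
    | zero =>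
      intro s hs hle
      by_cases hsN : s ∈ N
      · exact ⟨s, hsN, by simp [hzero s hs]⟩
      · exfalso
        rw [hN, not_and, not_not] at hsN
        obtain ⟨s₁, hs₁, hL, _⟩ := hsN hs
        have h1 : L s₁ ≤ B.sup L := Finset.le_sup hs₁
        omega
    | succ n ih =>
      intro s hs hle
      by_cases hsN : s ∈ N
      · exact ⟨s, hsN, by simp [hzero s hs]⟩
      · rw [hN, not_and, not_not] at hsN
        obtain ⟨s₁, hs₁, hL, hd₁⟩ := hsN hs
        have hsup : L s₁ ≤ B.sup L := Finset.le_sup hs₁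
        obtain ⟨t, htN, hdt⟩ := ih s₁ hs₁ (by omega)
        refine ⟨t, htN, ?_⟩
        have htri' := htri s hs s₁ hs₁ t (hNB t htN)
        have hsym' : d s s₁ = d s₁ s := hsymm s hs s₁ hs₁
        have key : ((2:ℝ)^(-(L s:ℤ)) - (2:ℝ)^(-(L s₁:ℤ))) / (2*K)
            + ((2:ℝ)^(-(L s₁:ℤ)) - (2:ℝ)^(-(L t:ℤ))) / (2*K)
            = ((2:ℝ)^(-(L s:ℤ)) - (2:ℝ)^(-(L t:ℤ))) / (2*K) := by ring
        linarith
  -- fibers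
  set F : α → Finset α := fun t =>
    B.filter (fun s => d s t ≤ (2:ℝ)^(-(L s:ℤ)) / (2*K)) with hF
  -- Step 3: levels in a fiber are at most L t
  have hlev : ∀ t ∈ N, ∀ s ∈ F t, L s ≤ L t := by
    intro t htN s hsF
    rw [hF, Finset.mem_filter] at hsF
    obtain ⟨hsB, hds⟩ := hsF
    by_contra h
    push_neg at h
    have hnt := ((hN t).mp htN).2
    apply hnt
    refine ⟨s, hsB, h, ?_⟩
    have hmono : (2:ℝ)^(-(L s:ℤ)+1) ≤ (2:ℝ)^(-(L t:ℤ)) := by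
      apply zpow_le_zpow_right₀ one_le_two
      omega
    have heq : (2:ℝ)^(-(L s:ℤ)+1) = 2 * (2:ℝ)^(-(L s:ℤ)) := by
      rw [zpow_add_one₀ (two_ne_zero)]; ring
    rw [heq] at hmono
    have : (2:ℝ)^(-(L s:ℤ)) / (2*K) ≤ ((2:ℝ)^(-(L t:ℤ)) - (2:ℝ)^(-(L s:ℤ))) / (2*K) := by
      apply div_le_div_of_nonneg_right _ h2K.le
      linarith
    linarith
  -- Step 2: levels are injective on each fiber
  have hinj : ∀ t ∈ N, Set.InjOn L (F t) := by
    intro t htN s hsF s' hs'F hLL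
    rw [hF, Finset.coe_filter, Set.mem_setOf_eq] at hsF hs'F
    obtain ⟨hsB, hds⟩ := hsF
    obtain ⟨hs'B, hds'⟩ := hs'F
    by_contra hne'
    have hsep' := hsep s hsB s' hs'B hne' hLL
    have htri' := htri s hsB t (hNB t htN) s' hs'B
    have hsym' : d t s' = d s' t := hsymm t (hNB t htN) s' hs'B
    have key : (2:ℝ)^(-(L s:ℤ)) / (2*K) + (2:ℝ)^(-(L s:ℤ)) / (2*K)
        = (2:ℝ)^(-(L s:ℤ)) / K := by ring
    rw [← hLL] at hds'
    linarith
  -- fiber cardinality bound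
  have fib_card : ∀ t ∈ N, (F t).card ≤ 2 + N.sup L := by
    intro t htN
    have h1 : (F t).card = ((F t).image L).card :=
      (Finset.card_image_of_injOn (hinj t htN)).symm
    have h2 : (F t).image L ⊆ Finset.range (L t + 1) := by
      intro n hn
      rw [Finset.mem_image] at hn
      obtain ⟨s, hsF, rfl⟩ := hn
      rw [Finset.mem_range]
      exact Nat.lt_succ_of_le (hlev t htN s hsF)
    have h3 : L t ≤ N.sup L := Finset.le_sup htN
    calc (F t).card = ((F t).image L).card := h1
      _ ≤ (Finset.range (L t + 1)).card := Finset.card_le_card h2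
      _ = L t + 1 := Finset.card_range _
      _ ≤ 2 + N.sup L := by omega
  -- assemble
  have hsub : B ⊆ N.biUnion F := by
    intro s hs
    obtain ⟨t, htN, hd⟩ := exist (B.sup L) s hs (Nat.sub_le _ _)
    rw [Finset.mem_biUnion]
    refine ⟨t, htN, ?_⟩
    rw [hF, Finset.mem_filter]
    refine ⟨hs, le_trans hd ?_⟩
    apply div_le_div_of_nonneg_right _ h2K.le
    have : (0:ℝ) ≤ (2:ℝ)^(-(L t:ℤ)) := by positivity
    linarith
  calc B.card ≤ (N.biUnion F).card := Finset.card_le_card hsub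
    _ ≤ ∑ t ∈ N, (F t).card := Finset.card_biUnion_le
    _ ≤ ∑ _t ∈ N, (2 + N.sup L) := Finset.sum_le_sum fib_card
    _ = N.card * (2 + N.sup L) := by rw [Finset.sum_const, smul_eq_mul]
end

section
/- Let T ≥ 1, let d be a metric on {1,...,T} with all distances at most 1, A ≥ 2 a number of actions, π : {1,...,T} → {1,...,A} a policy, M ⊆ {1,...,T} a margin, and ζ ≥ 2. Let p : {2,...,T} → {1,...,T} with p(t) < t and L : {1,...,T} → ℕ with L(1) = 0, L(p(t)) = L(t) - 1, and d(t,p(t)) ≤ 2^{1-L(t)}. Define C := {t : for all r, s ∈ {1,...,T} \ M with d(r,t) ≤ ζ·2^{-L(t)} and d(s,t) ≤ ζ·2^{-L(t)}, π(r) = π(s)}. If s ∈ C and t is a descendant of s in the tree defined by p, then t ∈ C. -/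
/-- The clean-trial predicate: every pair of non-margin points in the
`ζ·2^(-L t)`-neighbourhood of `t` receives the same policy action. -/
def IsClean (T : ℕ) (d : ℕ → ℕ → ℝ) (L : ℕ → ℕ) (pol : ℕ → ℕ) (M : Set ℕ)
    (ζ : ℝ) (t : ℕ) : Prop :=
  ∀ r ∈ Finset.Icc 1 T, ∀ s ∈ Finset.Icc 1 T, r ∉ M → s ∉ M →
    d r t ≤ ζ * (2 : ℝ) ^ (-(L t : ℤ)) → d s t ≤ ζ * (2 : ℝ) ^ (-(L t : ℤ)) →
    pol r = pol s

/-- cleanness is inherited by descendants. -/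
theorem stmt6 (T : ℕ) (hT : 1 ≤ T) (d : ℕ → ℕ → ℝ) (p : ℕ → ℕ) (L : ℕ → ℕ)
    (A : ℕ) (hA : 2 ≤ A) (pol : ℕ → ℕ)
    (hpol : ∀ t ∈ Finset.Icc 1 T, pol t ∈ Finset.Icc 1 A)
    (M : Set ℕ) (ζ : ℝ) (hζ : 2 ≤ ζ)
    (hsymm : ∀ s ∈ Finset.Icc 1 T, ∀ t ∈ Finset.Icc 1 T, d s t = d t s)
    (hnonneg : ∀ s ∈ Finset.Icc 1 T, ∀ t ∈ Finset.Icc 1 T, 0 ≤ d s t)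
    (hzero : ∀ t ∈ Finset.Icc 1 T, d t t = 0)
    (htri : ∀ r ∈ Finset.Icc 1 T, ∀ s ∈ Finset.Icc 1 T, ∀ t ∈ Finset.Icc 1 T,
      d r t ≤ d r s + d s t)
    (hbdd : ∀ s ∈ Finset.Icc 1 T, ∀ t ∈ Finset.Icc 1 T, d s t ≤ 1)
    (hp : ∀ t, 2 ≤ t → t ≤ T → p t < t)
    (hp1 : ∀ t, 2 ≤ t → t ≤ T → 1 ≤ p t)
    (hL1 : L 1 = 0)
    (hLp : ∀ t, 2 ≤ t → t ≤ T → L t = L (p t) + 1)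
    (hdp : ∀ t, 2 ≤ t → t ≤ T → d t (p t) ≤ (2 : ℝ) ^ ((1 : ℤ) - (L t : ℤ)))
    (s t : ℕ) (hs1 : 1 ≤ s) (hsT : s ≤ T) (ht1 : 1 ≤ t) (htT : t ≤ T)
    (hsC : IsClean T d L pol M ζ s)
    (hdesc : Relation.ReflTransGen (fun a b => 2 ≤ a ∧ a ≤ T ∧ b = p a) t s) :
    IsClean T d L pol M ζ t := by
  -- key step: if the parent is clean, so is the child
  have step : ∀ a, 2 ≤ a → a ≤ T → IsClean T d L pol M ζ (p a) →
      IsClean T d L pol M ζ a := by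
    intro a h2 haT hpa
    have ha : a ∈ Finset.Icc 1 T := Finset.mem_Icc.mpr ⟨le_trans one_le_two h2, haT⟩
    have hpaI : p a ∈ Finset.Icc 1 T :=
      Finset.mem_Icc.mpr ⟨hp1 a h2 haT, le_trans (le_of_lt (hp a h2 haT)) haT⟩
    intro r hr u hu hrM huM hdr hdu
    have hLa := hLp a h2 haT
    have hpow : (2 : ℝ) ^ (-(L (p a) : ℤ)) = 2 * (2 : ℝ) ^ (-(L a : ℤ)) := by
      rw [hLa]
      push_cast
      rw [neg_add, zpow_add₀ (by norm_num : (2:ℝ) ≠ 0), zpow_neg_one]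
      ring
    have hdpa : d a (p a) ≤ 2 * (2 : ℝ) ^ (-(L a : ℤ)) := by
      have := hdp a h2 haT
      rwa [show (1 : ℤ) - (L a : ℤ) = 1 + (-(L a : ℤ)) by ring,
        zpow_add₀ (by norm_num : (2:ℝ) ≠ 0), zpow_one] at this
    have hpos : (0 : ℝ) < (2 : ℝ) ^ (-(L a : ℤ)) := zpow_pos (by norm_num) _
    have key : ∀ x ∈ Finset.Icc 1 T, d x a ≤ ζ * (2 : ℝ) ^ (-(L a : ℤ)) →
        d x (p a) ≤ ζ * (2 : ℝ) ^ (-(L (p a) : ℤ)) := by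
      intro x hx hdx
      have htri' := htri x hx a ha (p a) hpaI
      rw [hpow]
      calc d x (p a) ≤ d x a + d a (p a) := htri'
        _ ≤ ζ * (2 : ℝ) ^ (-(L a : ℤ)) + 2 * (2 : ℝ) ^ (-(L a : ℤ)) := by
            exact add_le_add hdx hdpa
        _ = (ζ + 2) * (2 : ℝ) ^ (-(L a : ℤ)) := by ring
        _ ≤ (2 * ζ) * (2 : ℝ) ^ (-(L a : ℤ)) := by
            apply mul_le_mul_of_nonneg_right _ (le_of_lt hpos)
            linarith
        _ = ζ * (2 * (2 : ℝ) ^ (-(L a : ℤ))) := by ring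
    exact hpa r hr u hu hrM huM (key r hr hdr) (key u hu hdu)
  induction hdesc using Relation.ReflTransGen.head_induction_on with
  | refl => exact hsC
  | head h _ ih =>
    obtain ⟨h2, haT, hpe⟩ := h
    have hc := ih (hpe ▸ hp1 _ h2 haT) (hpe ▸ le_trans (le_of_lt (hp _ h2 haT)) haT)
    exact step _ h2 haT (hpe ▸ hc)
end

section
/- Let d be a metric on a finite set, K ≥ 1, ζ ≥ 2, and let B be a finite subset with level function L : B → ℕ satisfying: (i) same-level separation, i.e., for r ≠ t in B with L(r) = L(t), d(r,t) > 2^{-L(r)}/K; (ii) for all t ∈ B, 2^{-L(t)} ≥ ε(t)/(2(1+ζ)), where ε : B → ℝ_{>0} is a given function. Define N := {t ∈ B : there is no s ∈ B with L(s) > L(t) and d(s,t) ≤ (2^{-L(t)} - 2^{-L(s)})/(2K)}. Then for all distinct s, t ∈ N, d(s,t) > min(ε(s), ε(t)) / (8K(1+ζ)). -/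
/-- distinct elements of `N` are more than
`min(ε s, ε t)/(8K(1+ζ))` apart. -/
theorem stmt8 {α : Type*} (B : Finset α) (d : α → α → ℝ) (K ζ : ℝ)
    (hK : 1 ≤ K) (hζ : 2 ≤ ζ) (L : α → ℕ) (ε : α → ℝ)
    (hεpos : ∀ t ∈ B, 0 < ε t)
    (hsymm : ∀ s ∈ B, ∀ t ∈ B, d s t = d t s)
    (hnonneg : ∀ s ∈ B, ∀ t ∈ B, 0 ≤ d s t)
    (hzero : ∀ t ∈ B, d t t = 0)
    (htri : ∀ r ∈ B, ∀ s ∈ B, ∀ t ∈ B, d r t ≤ d r s + d s t)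
    (hsep : ∀ r ∈ B, ∀ t ∈ B, r ≠ t → L r = L t →
      (2 : ℝ) ^ (-(L r : ℤ)) / K < d r t)
    (hdepth : ∀ t ∈ B, ε t / (2 * (1 + ζ)) ≤ (2 : ℝ) ^ (-(L t : ℤ)))
    (N : Finset α)
    (hN : ∀ t, t ∈ N ↔ t ∈ B ∧ ¬ ∃ s ∈ B, L t < L s ∧
      d s t ≤ ((2 : ℝ) ^ (-(L t : ℤ)) - (2 : ℝ) ^ (-(L s : ℤ))) / (2 * K))
    (s t : α) (hs : s ∈ N) (ht : t ∈ N) (hne : s ≠ t) :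
    min (ε s) (ε t) / (8 * K * (1 + ζ)) < d s t := by
  have hKpos : (0 : ℝ) < K := by linarith
  have hζpos : (0 : ℝ) < 1 + ζ := by linarith
  have key : ∀ u ∈ N, ∀ v ∈ N, u ≠ v → L v ≤ L u →
      (2 : ℝ) ^ (-(L v : ℤ)) / (4 * K) < d u v := by
    intro u hu v hv huv hle
    have huB := ((hN u).1 hu).1
    have hvB := ((hN v).1 hv).1
    have hpow_v : (0 : ℝ) < (2 : ℝ) ^ (-(L v : ℤ)) := by positivity
    rcases eq_or_lt_of_le hle with heq | hlt
    · have h1 := hsep u huB v hvB huv heq.symm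
      rw [← heq] at h1
      have h2 : (2 : ℝ) ^ (-(L v : ℤ)) / (4 * K) ≤ (2 : ℝ) ^ (-(L v : ℤ)) / K := by
        apply div_le_div_of_nonneg_left hpow_v.le hKpos; linarith
      linarith
    · have hnv := ((hN v).1 hv).2
      push_neg at hnv
      have h2 := hnv u huB hlt
      have hpow : (2 : ℝ) ^ (-(L u : ℤ)) ≤ (2 : ℝ) ^ (-(L v : ℤ)) / 2 := by
        have h3 : (2 : ℝ) ^ (-(L u : ℤ)) ≤ (2 : ℝ) ^ (-(L v : ℤ) - 1) := by
          apply zpow_le_zpow_right₀ one_le_two; omega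
        have h4 : (2 : ℝ) ^ (-(L v : ℤ) - 1) = (2 : ℝ) ^ (-(L v : ℤ)) / 2 := by
          rw [zpow_sub₀ (by norm_num)]; norm_num
        linarith
      have h5 : (2 : ℝ) ^ (-(L v : ℤ)) / (4 * K) ≤
          ((2 : ℝ) ^ (-(L v : ℤ)) - (2 : ℝ) ^ (-(L u : ℤ))) / (2 * K) := by
        rw [div_le_div_iff₀ (by linarith) (by linarith)]
        nlinarith
      linarith
  have hsB := ((hN s).1 hs).1
  have htB := ((hN t).1 ht).1
  have fin : ∀ u ∈ B, min (ε s) (ε t) / (8 * K * (1 + ζ)) ≤ ε u / (8 * K * (1 + ζ)) →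
      min (ε s) (ε t) / (8 * K * (1 + ζ)) ≤ (2 : ℝ) ^ (-(L u : ℤ)) / (4 * K) := by
    intro u huB hmin
    have hd := hdepth u huB
    have : ε u / (8 * K * (1 + ζ)) ≤ (2 : ℝ) ^ (-(L u : ℤ)) / (4 * K) := by
      have he : ε u / (8 * K * (1 + ζ)) = (ε u / (2 * (1 + ζ))) / (4 * K) := by
        rw [div_div]; ring_nf
      rw [he]
      exact (div_le_div_iff_of_pos_right (by positivity)).2 hd
    linarith
  rcases le_total (L t) (L s) with hle | hle
  · have h := key s hs t ht hne hle
    have hm : min (ε s) (ε t) / (8 * K * (1 + ζ)) ≤ ε t / (8 * K * (1 + ζ)) := by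
      gcongr
      exact min_le_right _ _
    linarith [fin t htB hm]
  · have h := key t ht s hs hne.symm hle
    rw [hsymm t htB s hsB] at h
    have hm : min (ε s) (ε t) / (8 * K * (1 + ζ)) ≤ ε s / (8 * K * (1 + ζ)) := by
      gcongr
      exact min_le_left _ _
    linarith [fin s hsB hm]
end
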